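/- arXiv:1402.2546 — 5 statements merged into one kernel-verified Lean document; each statement's English description precedes it below -/
import Mathlib

section
/- Let $d_N \ge 1$ be an integer, let $0 < |r| < 1$ with $r s_{N_n} > 0$, let $m_1, m_2 > 0$, and suppose $F : [-1,1] \to \mathbb{R}$ is twice continuously differentiable with $F(\pm 1) = 0$, $F'(-1) = 2(1-r)^{d_N}/m_2 > 0$, $F'(1) = -2(1+r)^{d_N}/m_1 < 0$, and suppose $F''(\mathfrak{z}) = (2 d_N s_{N_n} r - k(1 + r\mathfrak{z}))(1 + r\mathfrak{z})^{d_N - 1}$ for some constant $k$. Then $F(\mathfrak{z}) > 0$ for all $\mathfrak{z} \in (-1,1)$. -/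
/-!
Suppose `F z ≤ 0` for some `z ∈ (-1, 1)`. Since `F(±1) = 0`, `F'(-1) > 0` and `F'(1) < 0`, `F` is
positive near both endpoints, so along `-1 < p < z < q < 1` with `F p, F q > 0 ≥ F z` the mean
value theorem makes `F'` positive, negative, positive, negative, and then `F''` negative, positive,
negative. This is impossible: as `1 + r z > 0`, `F''` has the sign of the affine function
`2 d_N s r - k (1 + r z)`, so the set where `F'' < 0` is an interval.
-/

open Set Filter Topology

lemma exists_pos_right_of_deriv_pos {f : ℝ → ℝ} {a z : ℝ} (hfa : f a = 0)
    (hf : 0 < deriv f a) (haz : a < z) : ∃ p ∈ Ioo a z, 0 < f p := by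
  have hsign : ∀ᶠ x in 𝓝[>] a, SignType.sign (f x) = SignType.sign (x - a) :=
    nhdsWithin_le_nhds (eventually_nhdsWithin_sign_eq_of_deriv_pos hf hfa)
  obtain ⟨p, hp, hp'⟩ := (hsign.and (Ioo_mem_nhdsGT haz)).exists
  exact ⟨p, hp', sign_eq_one_iff.mp (hp.trans (sign_pos (sub_pos.mpr hp'.1)))⟩

lemma exists_pos_left_of_deriv_neg {f : ℝ → ℝ} {b z : ℝ} (hfb : f b = 0)
    (hf : deriv f b < 0) (hzb : z < b) : ∃ q ∈ Ioo z b, 0 < f q := by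
  have hsign : ∀ᶠ x in 𝓝[<] b, SignType.sign (f x) = SignType.sign (b - x) :=
    nhdsWithin_le_nhds (eventually_nhdsWithin_sign_eq_of_deriv_neg hf hfb)
  obtain ⟨q, hq, hq'⟩ := (hsign.and (Ioo_mem_nhdsLT hzb)).exists
  exact ⟨q, hq', sign_eq_one_iff.mp (hq.trans (sign_pos (sub_pos.mpr hq'.2)))⟩

lemma exists_deriv_pos_of_lt {g : ℝ → ℝ} {x y : ℝ} (hg : DifferentiableOn ℝ g (Icc x y))
    (hxy : x < y) (h : g x < g y) : ∃ c ∈ Ioo x y, 0 < deriv g c := by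
  obtain ⟨c, hc, hslope⟩ :=
    exists_deriv_eq_slope g hxy hg.continuousOn (hg.mono Ioo_subset_Icc_self)
  exact ⟨c, hc, hslope ▸ div_pos (sub_pos.mpr h) (sub_pos.mpr hxy)⟩

lemma exists_deriv_neg_of_lt {g : ℝ → ℝ} {x y : ℝ} (hg : DifferentiableOn ℝ g (Icc x y))
    (hxy : x < y) (h : g y < g x) : ∃ c ∈ Ioo x y, deriv g c < 0 := by
  obtain ⟨c, hc, hslope⟩ :=
    exists_deriv_eq_slope g hxy hg.continuousOn (hg.mono Ioo_subset_Icc_self)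
  exact ⟨c, hc, hslope ▸ div_neg_of_neg_of_pos (sub_neg.mpr h) (sub_pos.mpr hxy)⟩

theorem pos_of_convex_setOf_deriv_deriv_neg {f : ℝ → ℝ} {a b : ℝ}
    (hf : DifferentiableOn ℝ f (Icc a b)) (hf' : DifferentiableOn ℝ (deriv f) (Ioo a b))
    (hfa : f a = 0) (hfb : f b = 0) (hf'a : 0 < deriv f a) (hf'b : deriv f b < 0)
    (hneg : Convex ℝ {x ∈ Ioo a b | deriv (deriv f) x < 0}) {z : ℝ} (hz : z ∈ Ioo a b) :
    0 < f z := by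
  by_contra! hfz
  obtain ⟨p, ⟨hap, hpz⟩, hfp⟩ := exists_pos_right_of_deriv_pos hfa hf'a hz.1
  obtain ⟨q, ⟨hzq, hqb⟩, hfq⟩ := exists_pos_left_of_deriv_neg hfb hf'b hz.2
  have hfI : ∀ {x y}, a ≤ x → y ≤ b → DifferentiableOn ℝ f (Icc x y) :=
    fun hx hy => hf.mono (Icc_subset_Icc hx hy)
  obtain ⟨ξ₁, ⟨haξ₁, hξ₁p⟩, h₁⟩ :=
    exists_deriv_pos_of_lt (hfI le_rfl (by linarith)) hap (by rwa [hfa])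
  obtain ⟨ξ₂, ⟨hpξ₂, hξ₂z⟩, h₂⟩ :=
    exists_deriv_neg_of_lt (hfI hap.le (by linarith)) hpz (by linarith)
  obtain ⟨ξ₃, ⟨hzξ₃, hξ₃q⟩, h₃⟩ :=
    exists_deriv_pos_of_lt (hfI (by linarith) hqb.le) hzq (by linarith)
  obtain ⟨ξ₄, ⟨hqξ₄, hξ₄b⟩, h₄⟩ :=
    exists_deriv_neg_of_lt (hfI (by linarith) le_rfl) hqb (by rwa [hfb])
  have hf'I : ∀ {x y}, a < x → y < b → DifferentiableOn ℝ (deriv f) (Icc x y) :=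
    fun hx hy => hf'.mono (Icc_subset_Ioo hx hy)
  obtain ⟨η₁, ⟨hξ₁η₁, hη₁ξ₂⟩, k₁⟩ :=
    exists_deriv_neg_of_lt (hf'I haξ₁ (by linarith)) (by linarith) (h₂.trans h₁)
  obtain ⟨η₂, ⟨hξ₂η₂, hη₂ξ₃⟩, k₂⟩ :=
    exists_deriv_pos_of_lt (hf'I (by linarith) (by linarith)) (by linarith) (h₂.trans h₃)
  obtain ⟨η₃, ⟨hξ₃η₃, hη₃ξ₄⟩, k₃⟩ :=
    exists_deriv_neg_of_lt (hf'I (by linarith) hξ₄b) (by linarith) (h₄.trans h₃)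
  have hη₁ : η₁ ∈ {x ∈ Ioo a b | deriv (deriv f) x < 0} := ⟨⟨by linarith, by linarith⟩, k₁⟩
  have hη₃ : η₃ ∈ {x ∈ Ioo a b | deriv (deriv f) x < 0} := ⟨⟨by linarith, by linarith⟩, k₃⟩
  exact lt_asymm k₂ (hneg.ordConnected.out hη₁ hη₃ ⟨by linarith, by linarith⟩).2

lemma ConvexOn.convex_setOf_neg_of_eq_mul {E : Type*} [AddCommMonoid E] [Module ℝ E]
    {s : Set E} {h g p : E → ℝ} (hg : ConvexOn ℝ s g) (hh : ∀ x ∈ s, h x = g x * p x)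
    (hp : ∀ x ∈ s, 0 < p x) : Convex ℝ {x ∈ s | h x < 0} := by
  convert hg.convex_lt 0 using 1
  refine sep_ext_iff.mpr fun x hx => ?_
  rw [hh x hx]
  exact ⟨fun h => neg_of_mul_neg_left h (hp x hx).le,
    fun h => mul_neg_of_neg_of_pos h (hp x hx)⟩

theorem stmt4_general (dN : ℕ) (r sNn k m1 m2 : ℝ)
    (hr1 : |r| < 1)
    (hm1 : 0 < m1) (hm2 : 0 < m2) (F : ℝ → ℝ) (hF : ContDiff ℝ 2 F)
    (hFm1 : F (-1) = 0) (hF1 : F 1 = 0)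
    (hF'm1 : deriv F (-1) = 2 * (1 - r) ^ dN / m2)
    (hF'1 : deriv F 1 = -(2 * (1 + r) ^ dN) / m1)
    (hF'' : ∀ z ∈ Set.Icc (-1 : ℝ) 1,
      deriv (deriv F) z =
        (2 * (dN : ℝ) * sNn * r - k * (1 + r * z)) * (1 + r * z) ^ (dN - 1)) :
    ∀ z ∈ Set.Ioo (-1 : ℝ) 1, 0 < F z := by
  obtain ⟨hr₁, hr₂⟩ := abs_lt.mp hr1
  have hpos : ∀ z ∈ Ioo (-1 : ℝ) 1, 0 < 1 + r * z := fun z ⟨hz₁, hz₂⟩ => by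
    nlinarith [mul_pos (by linarith : 0 < 1 + r) (by linarith : 0 < 1 + z),
      mul_pos (by linarith : 0 < 1 - r) (by linarith : 0 < 1 - z)]
  have haffine :
      ConvexOn ℝ (Ioo (-1 : ℝ) 1) fun z => 2 * (dN : ℝ) * sNn * r - k * (1 + r * z) :=
    ⟨convex_Ioo _ _, fun x _ y _ a b _ _ hab => le_of_eq <| by
      simp only [smul_eq_mul]; linear_combination (k - 2 * (dN : ℝ) * sNn * r) * hab⟩
  have hneg : Convex ℝ {z ∈ Ioo (-1 : ℝ) 1 | deriv (deriv F) z < 0} :=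
    haffine.convex_setOf_neg_of_eq_mul (fun z hz => hF'' z (Ioo_subset_Icc_self hz))
      fun z hz => pow_pos (hpos z hz) (dN - 1)
  have hF'm1_pos : 0 < deriv F (-1) := by
    rw [hF'm1]; exact div_pos (mul_pos two_pos (pow_pos (by linarith) dN)) hm2
  have hF'1_neg : deriv F 1 < 0 := by
    rw [hF'1]
    exact div_neg_of_neg_of_pos (neg_neg_of_pos (mul_pos two_pos (pow_pos (by linarith) dN))) hm1
  exact fun z hz => pos_of_convex_setOf_deriv_deriv_neg
    (hF.differentiable two_ne_zero).differentiableOn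
    hF.differentiable_deriv_two.differentiableOn hFm1 hF1 hF'm1_pos hF'1_neg hneg hz

theorem stmt4 (dN : ℕ) (hdN : 1 ≤ dN) (r sNn k m1 m2 : ℝ)
    (hr0 : 0 < |r|) (hr1 : |r| < 1) (hrs : 0 < r * sNn)
    (hm1 : 0 < m1) (hm2 : 0 < m2) (F : ℝ → ℝ) (hF : ContDiff ℝ 2 F)
    (hFm1 : F (-1) = 0) (hF1 : F 1 = 0)
    (hF'm1 : deriv F (-1) = 2 * (1 - r) ^ dN / m2)
    (hF'1 : deriv F 1 = -(2 * (1 + r) ^ dN) / m1)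
    (hF'' : ∀ z ∈ Set.Icc (-1 : ℝ) 1,
      deriv (deriv F) z =
        (2 * (dN : ℝ) * sNn * r - k * (1 + r * z)) * (1 + r * z) ^ (dN - 1)) :
    ∀ z ∈ Set.Ioo (-1 : ℝ) 1, 0 < F z :=
  stmt4_general dN r sNn k m1 m2 hr1 hm1 hm2 F hF hFm1 hF1 hF'm1 hF'1 hF''
end

section
/- Let $d_N \ge 1$ be an integer, $0 < |r| < 1$, and $s_{N_n}$ a real number with $s_{N_n} r \ge 0$. Let $P(\mathfrak{z}) = 2 d_N s_{N_n} r + (\alpha \mathfrak{z} + \beta)(1 + r\mathfrak{z})$ be a polynomial of degree at most 2 in $\mathfrak{z}$ (with $\alpha, \beta \in \mathbb{R}$). Suppose $F : [-1,1] \to \mathbb{R}$ satisfies $F''(\mathfrak{z}) = (1 + r\mathfrak{z})^{d_N - 1} P(\mathfrak{z})$, $F(\pm 1) = 0$, $F'(-1) > 0$, and $F'(1) < 0$. Then $F(\mathfrak{z}) > 0$ for all $\mathfrak{z} \in (-1,1)$. -/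
/-!
If `F z ≤ 0` at an interior point, then, since `F` is positive just inside both endpoints, `F'`
has the signs `+, -, +, -` at four successive points, so `F''` takes the signs `-, +, -` at
`t₁ < t₂ < t₃` in `(-1, 1)`. There the factor `(1 + r𝔷) ^ (d_N - 1)` is positive, so the quadratic
`P` has the same sign pattern, which forces `P < 0` outside `[t₁, t₃]`. But `P (-1/r) = 2 d_N s r ≥ 0`
and `|1/r| > 1`.
-/

open Set Filter

lemma exists_pos_of_deriv_pos_right {f : ℝ → ℝ} {x₀ m : ℝ} (hf : 0 < deriv f x₀) (hx₀ : f x₀ = 0)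
    (hm : x₀ < m) : ∃ a ∈ Ioo x₀ m, 0 < f a := by
  have hsign := (eventually_nhdsWithin_sign_eq_of_deriv_pos hf hx₀).filter_mono
    (nhdsWithin_le_nhds (s := Ioi x₀))
  obtain ⟨a, ha, hsa⟩ := (eventually_mem_set.2 (Ioo_mem_nhdsGT hm) |>.and hsign).exists
  exact ⟨a, ha, sign_eq_one_iff.1 (hsa.trans (sign_eq_one_iff.2 (sub_pos.2 ha.1)))⟩

lemma exists_pos_of_deriv_neg_left {f : ℝ → ℝ} {x₀ m : ℝ} (hf : deriv f x₀ < 0) (hx₀ : f x₀ = 0)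
    (hm : m < x₀) : ∃ b ∈ Ioo m x₀, 0 < f b := by
  have hsign := (eventually_nhdsWithin_sign_eq_of_deriv_neg hf hx₀).filter_mono
    (nhdsWithin_le_nhds (s := Iio x₀))
  obtain ⟨b, hb, hsb⟩ := (eventually_mem_set.2 (Ioo_mem_nhdsLT hm) |>.and hsign).exists
  exact ⟨b, hb, sign_eq_one_iff.1 (hsb.trans (sign_eq_one_iff.2 (sub_pos.2 hb.2)))⟩

section MeanValue

variable {f : ℝ → ℝ} {a b : ℝ}

lemma exists_deriv_neg_of_lt_s5 (hab : a < b) (hfc : ContinuousOn f (Icc a b))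
    (hfd : DifferentiableOn ℝ f (Ioo a b)) (h : f b < f a) : ∃ c ∈ Ioo a b, deriv f c < 0 := by
  obtain ⟨c, hc, hslope⟩ := exists_deriv_eq_slope f hab hfc hfd
  exact ⟨c, hc, hslope ▸ div_neg_of_neg_of_pos (sub_neg.2 h) (sub_pos.2 hab)⟩

lemma exists_deriv_pos_of_lt_s5 (hab : a < b) (hfc : ContinuousOn f (Icc a b))
    (hfd : DifferentiableOn ℝ f (Ioo a b)) (h : f a < f b) : ∃ c ∈ Ioo a b, 0 < deriv f c := by
  obtain ⟨c, hc, hslope⟩ := exists_deriv_eq_slope f hab hfc hfd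
  exact ⟨c, hc, hslope ▸ div_pos (sub_pos.2 h) (sub_pos.2 hab)⟩

end MeanValue

lemma exists_deriv_neg_pos_neg {g : ℝ → ℝ} (hg : Differentiable ℝ g) {x c₁ c₂ z : ℝ}
    (hxc₁ : x < c₁) (hc₁₂ : c₁ < c₂) (hc₂z : c₂ < z)
    (hx : 0 < g x) (hc₁ : g c₁ < 0) (hc₂ : 0 < g c₂) (hz : g z < 0) :
    ∃ t₁ ∈ Ioo x c₁, ∃ t₂ ∈ Ioo c₁ c₂, ∃ t₃ ∈ Ioo c₂ z,
      deriv g t₁ < 0 ∧ 0 < deriv g t₂ ∧ deriv g t₃ < 0 := by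
  obtain ⟨t₁, ht₁, h₁⟩ := exists_deriv_neg_of_lt_s5 hxc₁ hg.continuous.continuousOn
    hg.differentiableOn (hc₁.trans hx)
  obtain ⟨t₂, ht₂, h₂⟩ := exists_deriv_pos_of_lt_s5 hc₁₂ hg.continuous.continuousOn
    hg.differentiableOn (hc₁.trans hc₂)
  obtain ⟨t₃, ht₃, h₃⟩ := exists_deriv_neg_of_lt_s5 hc₂z hg.continuous.continuousOn
    hg.differentiableOn (hz.trans hc₂)
  exact ⟨t₁, ht₁, t₂, ht₂, t₃, ht₃, h₁, h₂, h₃⟩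

lemma exists_deriv_deriv_neg_pos_neg {f : ℝ → ℝ} (hf : ContDiff ℝ 2 f) {x y z : ℝ}
    (hy : y ∈ Ioo x z) (hfx : f x = 0) (hfz : f z = 0) (hf'x : 0 < deriv f x)
    (hf'z : deriv f z < 0) (hfy : f y ≤ 0) :
    ∃ t₁ t₂ t₃, x < t₁ ∧ t₁ < t₂ ∧ t₂ < t₃ ∧ t₃ < z ∧
      deriv (deriv f) t₁ < 0 ∧ 0 < deriv (deriv f) t₂ ∧ deriv (deriv f) t₃ < 0 := by
  have hd : Differentiable ℝ f := hf.differentiable (by norm_num)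
  have hd' : Differentiable ℝ (deriv f) := (hf.iterate_deriv' 1 1).differentiable (by norm_num)
  obtain ⟨a, ha, hfa⟩ := exists_pos_of_deriv_pos_right hf'x hfx hy.1
  obtain ⟨b, hb, hfb⟩ := exists_pos_of_deriv_neg_left hf'z hfz hy.2
  obtain ⟨c₁, hc₁, hf'c₁⟩ := exists_deriv_neg_of_lt_s5 ha.2 hd.continuous.continuousOn
    hd.differentiableOn (hfy.trans_lt hfa)
  obtain ⟨c₂, hc₂, hf'c₂⟩ := exists_deriv_pos_of_lt_s5 hb.1 hd.continuous.continuousOn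
    hd.differentiableOn (hfy.trans_lt hfb)
  obtain ⟨t₁, ht₁, t₂, ht₂, t₃, ht₃, h₁, h₂, h₃⟩ := exists_deriv_neg_pos_neg hd'
    (ha.1.trans hc₁.1) (hc₁.2.trans hc₂.1) (hc₂.2.trans hb.2) hf'x hf'c₁ hf'c₂ hf'z
  exact ⟨t₁, t₂, t₃, ht₁.1, ht₂.1.trans' ht₁.2, ht₃.1.trans' ht₂.2, ht₃.2, h₁, h₂, h₃⟩

lemma quadratic_neg_of_neg_pos_neg {q : ℝ → ℝ} {a b c : ℝ} (hq : ∀ t, q t = a * t ^ 2 + b * t + c)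
    {t₁ t₂ t₃ u : ℝ} (h₁₂ : t₁ < t₂) (h₂₃ : t₂ < t₃)
    (h₁ : q t₁ < 0) (h₂ : 0 < q t₂) (h₃ : q t₃ < 0) (hu : u < t₁ ∨ t₃ < u) : q u < 0 := by
  have lagrange : ∀ x y z, q x * (z - y) - q y * (z - x) + q z * (y - x) =
      a * ((y - x) * (z - x) * (z - y)) := by
    intro x y z
    simp only [hq]
    ring
  have ha : a < 0 := by
    have := lagrange t₁ t₂ t₃
    nlinarith [mul_pos (mul_pos (sub_pos.2 h₁₂) (sub_pos.2 (h₁₂.trans h₂₃))) (sub_pos.2 h₂₃)]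
  rcases hu with hu | hu
  · have := lagrange u t₁ t₂
    nlinarith [mul_pos (mul_pos (sub_pos.2 hu) (sub_pos.2 (hu.trans h₁₂))) (sub_pos.2 h₁₂)]
  · have := lagrange t₂ t₃ u
    nlinarith [mul_pos (mul_pos (sub_pos.2 h₂₃) (sub_pos.2 (h₂₃.trans hu))) (sub_pos.2 hu)]

lemma one_add_mul_pos {r t : ℝ} (hr : |r| < 1) (ht : t ∈ Icc (-1 : ℝ) 1) : 0 < 1 + r * t := by
  have hrt : |r * t| < 1 := by
    rw [abs_mul]
    exact (mul_le_of_le_one_right (abs_nonneg r) (abs_le.2 ht)).trans_lt hr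
  linarith [neg_abs_le (r * t)]

lemma lt_neg_one_or_one_lt_of_mul_eq_neg_one {r u : ℝ} (hr : |r| < 1) (hru : r * u = -1) :
    u < -1 ∨ 1 < u := by
  rcases lt_or_gt_of_ne (left_ne_zero_of_mul (hru ▸ by norm_num : r * u ≠ 0)) with h | h
  · right
    nlinarith [neg_abs_le r]
  · left
    nlinarith [le_abs_self r]

theorem stmt5_general (dN : ℕ) (r sNn α β : ℝ)
    (hr0 : 0 < |r|) (hr1 : |r| < 1) (hrs : 0 ≤ sNn * r)
    (F : ℝ → ℝ) (hF : ContDiff ℝ 2 F)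
    (hFm1 : F (-1) = 0) (hF1 : F 1 = 0)
    (hF'm1 : 0 < deriv F (-1)) (hF'1 : deriv F 1 < 0)
    (hF'' : ∀ z ∈ Set.Icc (-1 : ℝ) 1,
      deriv (deriv F) z =
        (1 + r * z) ^ (dN - 1) * (2 * (dN : ℝ) * sNn * r + (α * z + β) * (1 + r * z))) :
    ∀ z ∈ Set.Ioo (-1 : ℝ) 1, 0 < F z := by
  intro z hz
  by_contra! hFz
  obtain ⟨t₁, t₂, t₃, h₁, h₁₂, h₂₃, h₃, hF''₁, hF''₂, hF''₃⟩ :=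
    exists_deriv_deriv_neg_pos_neg hF hz hFm1 hF1 hF'm1 hF'1 hFz
  set Q : ℝ → ℝ := fun t => 2 * (dN : ℝ) * sNn * r + (α * t + β) * (1 + r * t) with hQ
  have hweight : ∀ t ∈ Icc (-1 : ℝ) 1, 0 ≤ (1 + r * t) ^ (dN - 1) :=
    fun t ht => (pow_pos (one_add_mul_pos hr1 ht) _).le
  have hQ₁ : Q t₁ < 0 := by
    have ht : t₁ ∈ Icc (-1 : ℝ) 1 := ⟨h₁.le, by linarith⟩
    exact neg_of_mul_neg_right (hF'' t₁ ht ▸ hF''₁) (hweight t₁ ht)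
  have hQ₂ : 0 < Q t₂ := by
    have ht : t₂ ∈ Icc (-1 : ℝ) 1 := ⟨by linarith, by linarith⟩
    exact pos_of_mul_pos_right (hF'' t₂ ht ▸ hF''₂) (hweight t₂ ht)
  have hQ₃ : Q t₃ < 0 := by
    have ht : t₃ ∈ Icc (-1 : ℝ) 1 := ⟨by linarith, h₃.le⟩
    exact neg_of_mul_neg_right (hF'' t₃ ht ▸ hF''₃) (hweight t₃ ht)
  have hroot : r * (-1 / r) = -1 := by field_simp [abs_pos.1 hr0]
  have hQroot : 0 ≤ Q (-1 / r) := by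
    simp only [hQ, hroot]
    nlinarith [mul_nonneg (Nat.cast_nonneg (α := ℝ) dN) hrs]
  have hout : -1 / r < t₁ ∨ t₃ < -1 / r :=
    (lt_neg_one_or_one_lt_of_mul_eq_neg_one hr1 hroot).imp (·.trans h₁) h₃.trans
  exact hQroot.not_gt (quadratic_neg_of_neg_pos_neg (a := α * r) (b := α + β * r)
    (c := 2 * dN * sNn * r + β) (fun t => by simp only [hQ]; ring) h₁₂ h₂₃ hQ₁ hQ₂ hQ₃ hout)

theorem stmt5 (dN : ℕ) (hdN : 1 ≤ dN) (r sNn α β : ℝ)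
    (hr0 : 0 < |r|) (hr1 : |r| < 1) (hrs : 0 ≤ sNn * r)
    (F : ℝ → ℝ) (hF : ContDiff ℝ 2 F)
    (hFm1 : F (-1) = 0) (hF1 : F 1 = 0)
    (hF'm1 : 0 < deriv F (-1)) (hF'1 : deriv F 1 < 0)
    (hF'' : ∀ z ∈ Set.Icc (-1 : ℝ) 1,
      deriv (deriv F) z =
        (1 + r * z) ^ (dN - 1) * (2 * (dN : ℝ) * sNn * r + (α * z + β) * (1 + r * z))) :
    ∀ z ∈ Set.Ioo (-1 : ℝ) 1, 0 < F z :=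
  stmt5_general dN r sNn α β hr0 hr1 hrs F hF hFm1 hF1 hF'm1 hF'1 hF''
end

section
/- Let $d_N \ge 1$ be an integer and fix $t \in (0,1)$. Define $j(b) = \int_{-1}^{1} \big((1-b) - (1+b)\mathfrak{z}\big)\big((b+t) + (b-t)\mathfrak{z}\big)^{d_N}\, d\mathfrak{z}$ for $b > t$. Then $j(t) > 0$ and $j(b) \to -\infty$ as $b \to +\infty$; consequently there exists $b \in (t, +\infty)$ with $j(b) = 0$. -/
/-- The function `j(b)` of the Sasaki–Einstein slope condition. -/
noncomputable def jfun (dN : ℕ) (t b : ℝ) : ℝ :=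
  ∫ z in (-1 : ℝ)..1, ((1 - b) - (1 + b) * z) * ((b + t) + (b - t) * z) ^ dN

/-!
The integrand of `j(b)` is homogeneous of degree `n + 1` in `(1, b, t)`, so
`j(b) = b ^ (n + 1) * J(1 / b)` for a function `J` that is continuous in its parameter. At the
parameter `0` the integrand of `J` is `-(1 + z) ^ (n + 1) < 0`, hence `j(b) → -∞`. At `b = t` the
second factor is the constant `(2t) ^ n` and `j(t) = 2(1 - t)(2t) ^ n > 0`; the intermediate value
theorem gives the root.
-/

open Filter Topology intervalIntegral

noncomputable def jfunRescaled (n : ℕ) (t s : ℝ) : ℝ :=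
  ∫ z in (-1 : ℝ)..1, ((s - 1) - (s + 1) * z) * ((1 + t * s) + (1 - t * s) * z) ^ n

lemma jfun_eq_pow_mul_jfunRescaled (n : ℕ) (t : ℝ) {b : ℝ} (hb : b ≠ 0) :
    jfun n t b = b ^ (n + 1) * jfunRescaled n t b⁻¹ := by
  rw [jfun, jfunRescaled, ← integral_const_mul]
  congr 1 with z
  have hlin : (1 - b) - (1 + b) * z = b * ((b⁻¹ - 1) - (b⁻¹ + 1) * z) := by field_simp
  have hbase : (b + t) + (b - t) * z = b * ((1 + t * b⁻¹) + (1 - t * b⁻¹) * z) := by field_simp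
  rw [hlin, hbase, mul_pow]
  ring

lemma continuous_jfun (n : ℕ) (t : ℝ) : Continuous (jfun n t) :=
  continuous_parametric_intervalIntegral_of_continuous' (by fun_prop) _ _

lemma continuous_jfunRescaled (n : ℕ) (t : ℝ) : Continuous (jfunRescaled n t) :=
  continuous_parametric_intervalIntegral_of_continuous' (by fun_prop) _ _

lemma jfunRescaled_zero_neg (n : ℕ) (t : ℝ) : jfunRescaled n t 0 < 0 := by
  have hpos : 0 < ∫ z in (-1 : ℝ)..1, (1 + z) ^ (n + 1) :=
    intervalIntegral_pos_of_pos_on ((by fun_prop : Continuous _).intervalIntegrable _ _)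
      (fun z hz => pow_pos (by linarith [hz.1]) _) (by norm_num)
  have : jfunRescaled n t 0 = -∫ z in (-1 : ℝ)..1, (1 + z) ^ (n + 1) := by
    rw [jfunRescaled, ← integral_neg]
    congr 1 with z
    ring
  linarith

lemma tendsto_jfun_atBot (n : ℕ) (t : ℝ) : Tendsto (jfun n t) atTop atBot := by
  have hrescaled : Tendsto (fun b => jfunRescaled n t b⁻¹) atTop (𝓝 (jfunRescaled n t 0)) :=
    ((continuous_jfunRescaled n t).tendsto 0).comp tendsto_inv_atTop_zero
  refine ((tendsto_pow_atTop n.succ_ne_zero).atTop_mul_neg (jfunRescaled_zero_neg n t)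
    hrescaled).congr' ?_
  filter_upwards [eventually_gt_atTop 0] with b hb
  exact (jfun_eq_pow_mul_jfunRescaled n t hb.ne').symm

lemma jfun_self (n : ℕ) (t : ℝ) : jfun n t t = 2 * (1 - t) * (2 * t) ^ n := by
  have hlin : ∫ z in (-1 : ℝ)..1, ((1 - t) - (1 + t) * z) = 2 * (1 - t) := by
    rw [integral_sub intervalIntegrable_const
        ((continuous_const_mul (1 + t)).intervalIntegrable _ _),
      integral_const_mul, integral_id, intervalIntegral.integral_const]
    norm_num
  simp only [jfun, sub_self, zero_mul, add_zero, integral_mul_const, hlin, two_mul]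

lemma jfun_self_pos {n : ℕ} {t : ℝ} (ht0 : 0 < t) (ht1 : t < 1) : 0 < jfun n t t := by
  rw [jfun_self]
  have : 0 < 1 - t := by linarith
  positivity

theorem stmt8_general (dN : ℕ) (t : ℝ) (ht : t ∈ Set.Ioo (0 : ℝ) 1) :
    0 < jfun dN t t ∧
    Filter.Tendsto (jfun dN t) Filter.atTop Filter.atBot ∧
    ∃ b : ℝ, t < b ∧ jfun dN t b = 0 := by
  obtain ⟨ht0, ht1⟩ := ht
  have hpos : 0 < jfun dN t t := jfun_self_pos ht0 ht1
  have hbot := tendsto_jfun_atBot dN t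
  obtain ⟨b, hb, hzero⟩ :=
    intermediate_value_Ioi' (continuous_jfun dN t).continuousOn hbot (Set.mem_Iio.2 hpos)
  exact ⟨hpos, hbot, b, hb, hzero⟩

theorem stmt8 (dN : ℕ) (hdN : 1 ≤ dN) (t : ℝ) (ht : t ∈ Set.Ioo (0 : ℝ) 1) :
    0 < jfun dN t t ∧
    Filter.Tendsto (jfun dN t) Filter.atTop Filter.atBot ∧
    ∃ b : ℝ, t < b ∧ jfun dN t b = 0 :=
  stmt8_general dN t ht
end

section
/- Let $d_N \ge 1$ be an integer and $t \in (0,1)$. The polynomial $h(b) = (1 + d_N) b^{d_N + 3} - (1 + 2t + d_N t) b^{d_N + 2} + (2 + d_N + t) t^{d_N + 1} b - (1 + d_N) t^{d_N + 2}$ satisfies $h''(t) < 0$ and $h(b) \to +\infty$ as $b \to +\infty$; consequently $h$ has a root in $(t, +\infty)$. -/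
/-!
Since `h(t) = h'(t) = 0` and `h''(t) = (d_N + 1)(d_N + 2)(t - 1) t^{d_N} < 0`, the derivative `h'`
changes sign from positive to negative at `t`, so `h` is strictly decreasing, hence negative, just
to the right of `t`. As the leading coefficient `1 + d_N` is positive, `h` tends to `+∞`, and the
intermediate value theorem yields a root beyond `t`.
-/

/-- The polynomial `h(b)` of the reduced CSC equation in the Kähler-Einstein case. -/
noncomputable def hfun (dN : ℕ) (t : ℝ) : ℝ → ℝ := fun b =>
  (1 + (dN : ℝ)) * b ^ (dN + 3) - (1 + 2 * t + (dN : ℝ) * t) * b ^ (dN + 2)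
    + (2 + (dN : ℝ) + t) * t ^ (dN + 1) * b - (1 + (dN : ℝ)) * t ^ (dN + 2)

open Filter Topology Set

section DoubleRoot

variable {f : ℝ → ℝ} {a : ℝ}

theorem exists_gt_lt_of_deriv_deriv_neg (hf : Differentiable ℝ f) (hd : deriv f a = 0)
    (hdd : deriv (deriv f) a < 0) : ∃ b, a < b ∧ f b < f a := by
  have hneg : ∀ᶠ x in 𝓝[>] a, deriv f x < 0 :=
    deriv_neg_right_of_sign_deriv <| nhdsWithin_le_nhds <|
      eventually_nhdsWithin_sign_eq_of_deriv_neg hdd hd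
  obtain ⟨b, hab, hb⟩ := (nhdsGT_basis a).eventually_iff.mp hneg
  have hanti : StrictAntiOn f (Icc a b) := by
    refine strictAntiOn_of_deriv_neg (convex_Icc a b) hf.continuous.continuousOn fun x hx => ?_
    rw [interior_Icc] at hx
    exact hb hx
  exact ⟨b, hab, hanti (left_mem_Icc.2 hab.le) (right_mem_Icc.2 hab.le) hab⟩

theorem exists_root_gt_of_deriv_deriv_neg (hf : Differentiable ℝ f) (ha : f a = 0)
    (hd : deriv f a = 0) (hdd : deriv (deriv f) a < 0) (htop : Tendsto f atTop atTop) :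
    ∃ b, a < b ∧ f b = 0 := by
  obtain ⟨b, hab, hb⟩ := exists_gt_lt_of_deriv_deriv_neg hf hd hdd
  obtain ⟨c, hc, hbc⟩ := ((htop.eventually_ge_atTop 0).and (eventually_ge_atTop b)).exists
  obtain ⟨x, hx, hfx⟩ :=
    intermediate_value_Icc hbc hf.continuous.continuousOn ⟨(ha ▸ hb).le, hc⟩
  exact ⟨x, hab.trans_le hx.1, hfx⟩

end DoubleRoot

section
variable (dN : ℕ) (t : ℝ)

theorem differentiable_hfun : Differentiable ℝ (hfun dN t) := by
  unfold hfun; fun_prop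

theorem hfun_self : hfun dN t t = 0 := by
  simp only [hfun, pow_succ]; ring

theorem hasDerivAt_hfun (b : ℝ) :
    HasDerivAt (hfun dN t)
      ((1 + (dN : ℝ)) * (dN + 3) * b ^ (dN + 2) - (1 + 2 * t + (dN : ℝ) * t) * (dN + 2) * b ^ (dN + 1)
        + (2 + (dN : ℝ) + t) * t ^ (dN + 1)) b := by
  have h := ((((hasDerivAt_pow (dN + 3) b).const_mul (1 + (dN : ℝ))).sub
    ((hasDerivAt_pow (dN + 2) b).const_mul (1 + 2 * t + (dN : ℝ) * t))).add
    ((hasDerivAt_id b).const_mul ((2 + (dN : ℝ) + t) * t ^ (dN + 1)))).sub_const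
    ((1 + (dN : ℝ)) * t ^ (dN + 2))
  refine h.congr_deriv ?_
  push_cast; ring

theorem deriv_hfun :
    deriv (hfun dN t) = fun b => (1 + (dN : ℝ)) * (dN + 3) * b ^ (dN + 2)
      - (1 + 2 * t + (dN : ℝ) * t) * (dN + 2) * b ^ (dN + 1) + (2 + (dN : ℝ) + t) * t ^ (dN + 1) :=
  funext fun b => (hasDerivAt_hfun dN t b).deriv

theorem deriv_hfun_self : deriv (hfun dN t) t = 0 := by
  rw [deriv_hfun]; simp only [pow_succ]; ring

theorem deriv_deriv_hfun_self :
    deriv (deriv (hfun dN t)) t = ((dN : ℝ) + 1) * (dN + 2) * (t - 1) * t ^ dN := by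
  have h : HasDerivAt (deriv (hfun dN t))
      ((1 + (dN : ℝ)) * (dN + 3) * ((dN + 2 : ℕ) * t ^ (dN + 1))
        - (1 + 2 * t + (dN : ℝ) * t) * (dN + 2) * ((dN + 1 : ℕ) * t ^ dN)) t := by
    rw [deriv_hfun]
    exact (((hasDerivAt_pow (dN + 2) t).const_mul ((1 + (dN : ℝ)) * (dN + 3))).sub
      ((hasDerivAt_pow (dN + 1) t).const_mul ((1 + 2 * t + (dN : ℝ) * t) * (dN + 2)))).add_const
      ((2 + (dN : ℝ) + t) * t ^ (dN + 1))
  rw [h.deriv]; push_cast; simp only [pow_succ]; ring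

end

theorem tendsto_hfun_atTop (dN : ℕ) {t : ℝ} (ht : 0 < t) : Tendsto (hfun dN t) atTop atTop := by
  have hlead : Tendsto (fun b : ℝ => b ^ (dN + 2) * ((1 + (dN : ℝ)) * b - (1 + 2 * t + dN * t)))
      atTop atTop :=
    (tendsto_pow_atTop (by omega)).atTop_mul_atTop₀
      (tendsto_atTop_add_const_right _ _ (tendsto_id.const_mul_atTop (by positivity)))
  have hlin : Tendsto (fun b : ℝ => (2 + (dN : ℝ) + t) * t ^ (dN + 1) * b - (1 + dN) * t ^ (dN + 2))
      atTop atTop :=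
    tendsto_atTop_add_const_right _ _ (tendsto_id.const_mul_atTop (by positivity))
  refine (hlead.atTop_add_atTop hlin).congr fun b => ?_
  simp only [hfun, pow_succ]; ring

theorem stmt10_general (dN : ℕ) (t : ℝ) (ht : t ∈ Set.Ioo (0 : ℝ) 1) :
    deriv (deriv (hfun dN t)) t < 0 ∧
    Filter.Tendsto (hfun dN t) Filter.atTop Filter.atTop ∧
    ∃ b : ℝ, t < b ∧ hfun dN t b = 0 := by
  obtain ⟨ht0, ht1⟩ := ht
  have hdd : deriv (deriv (hfun dN t)) t < 0 := by
    rw [deriv_deriv_hfun_self]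
    exact mul_neg_of_neg_of_pos
      (mul_neg_of_pos_of_neg (by positivity) (sub_neg.2 ht1)) (pow_pos ht0 dN)
  have htop := tendsto_hfun_atTop dN ht0
  exact ⟨hdd, htop, exists_root_gt_of_deriv_deriv_neg (differentiable_hfun dN t)
    (hfun_self dN t) (deriv_hfun_self dN t) hdd htop⟩

theorem stmt10 (dN : ℕ) (hdN : 1 ≤ dN) (t : ℝ) (ht : t ∈ Set.Ioo (0 : ℝ) 1) :
    deriv (deriv (hfun dN t)) t < 0 ∧
    Filter.Tendsto (hfun dN t) Filter.atTop Filter.atTop ∧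
    ∃ b : ℝ, t < b ∧ hfun dN t b = 0 :=
  stmt10_general dN t ht
end

section
/- For $k > 1$ rational, the quantity $t = \frac{\int_{-1}^1 (1 - \mathfrak{z})((k+1) + (k-1)\mathfrak{z})^{d_N}\, d\mathfrak{z}}{k \int_{-1}^1 (1 + \mathfrak{z})((k+1) + (k-1)\mathfrak{z})^{d_N}\, d\mathfrak{z}}$ is a rational number satisfying $0 < t < 1$, and $b = kt$ satisfies the Sasaki-Einstein slope equation $\int_{-1}^1 ((1 - b) - (1 + b)\mathfrak{z})((b + t) + (b - t)\mathfrak{z})^{d_N}\, d\mathfrak{z} = 0$. -/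
/-!
Write `t = A / (k B)`, where `A` and `B` are the two integrals. Both are integrals over `[-1, 1]`
of polynomials with rational coefficients, hence rational, and both are positive since their
integrands are positive on `(-1, 1)`. The bound `A < k B` is a Chebyshev-type inequality for two
increasing linear factors. With `b = k t` the second factor of the slope integrand becomes
`t ((k + 1) + (k - 1) z)`, so the slope integral equals `t ^ d (A - k t B) = 0`.
-/

open Polynomial Set intervalIntegral

theorem Polynomial.exists_rat_intervalIntegral_aeval_eq (p : ℚ[X]) (a b : ℚ) :
    ∃ q : ℚ, ∫ x in (a : ℝ)..b, aeval x p = q := by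
  induction p using Polynomial.induction_on' with
  | add p r hp hr =>
    obtain ⟨qp, hqp⟩ := hp
    obtain ⟨qr, hqr⟩ := hr
    refine ⟨qp + qr, ?_⟩
    simp_rw [map_add]
    rw [integral_add (p.continuous_aeval.intervalIntegrable _ _)
      (r.continuous_aeval.intervalIntegrable _ _), hqp, hqr, Rat.cast_add]
  | monomial n c =>
    refine ⟨c * (b ^ (n + 1) - a ^ (n + 1)) / (n + 1), ?_⟩
    simp only [aeval_monomial, eq_ratCast, integral_const_mul, integral_pow]
    push_cast
    ring

section

variable {k : ℝ}

theorem add_one_add_sub_one_mul_pos (hk : 1 < k) {z : ℝ} (hz : z ∈ Icc (-1 : ℝ) 1) :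
    0 < (k + 1) + (k - 1) * z := by
  nlinarith [hz.1]

theorem integral_one_sub_mul_linear_pow_pos (hk : 1 < k) (d : ℕ) :
    0 < ∫ z in (-1 : ℝ)..1, (1 - z) * ((k + 1) + (k - 1) * z) ^ d :=
  intervalIntegral_pos_of_pos_on (Continuous.intervalIntegrable (by fun_prop) _ _)
    (fun z hz ↦ mul_pos (by linarith [hz.2])
      (pow_pos (add_one_add_sub_one_mul_pos hk (Ioo_subset_Icc_self hz)) d)) (by norm_num)

theorem integral_one_add_mul_linear_pow_pos (hk : 1 < k) (d : ℕ) :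
    0 < ∫ z in (-1 : ℝ)..1, (1 + z) * ((k + 1) + (k - 1) * z) ^ d :=
  intervalIntegral_pos_of_pos_on (Continuous.intervalIntegrable (by fun_prop) _ _)
    (fun z hz ↦ mul_pos (by linarith [hz.1])
      (pow_pos (add_one_add_sub_one_mul_pos hk (Ioo_subset_Icc_self hz)) d)) (by norm_num)

/- Chebyshev's trick: `ℓ z = (k - 1) + (k + 1) z` and `P z = (k + 1) + (k - 1) z` both increase,
and `ℓ` vanishes at `z₀ = -(k - 1)/(k + 1)`, where `P z₀ = 4k/(k + 1)`. Hence
`ℓ z * P z ^ d ≥ ℓ z * P z₀ ^ d`, and `∫ ℓ = 2(k - 1) > 0`. -/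
theorem integral_mul_linear_pow_pos (hk : 1 < k) (d : ℕ) :
    0 < ∫ z in (-1 : ℝ)..1, ((k - 1) + (k + 1) * z) * ((k + 1) + (k - 1) * z) ^ d := by
  have hk0 : 0 < k := by linarith
  have hratio : 0 < (k - 1) / (k + 1) := div_pos (by linarith) (by linarith)
  set c : ℝ := (4 * k / (k + 1)) ^ d
  have hc : 0 < c := by positivity
  have hpoint : ∀ z ∈ Icc (-1 : ℝ) 1,
      c * ((k - 1) + (k + 1) * z) ≤ ((k - 1) + (k + 1) * z) * ((k + 1) + (k - 1) * z) ^ d := by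
    intro z hz
    have hP := add_one_add_sub_one_mul_pos hk hz
    have hdiff : (k + 1) + (k - 1) * z - 4 * k / (k + 1)
        = (k - 1) / (k + 1) * ((k - 1) + (k + 1) * z) := by
      field_simp
      ring
    rw [mul_comm c]
    rcases le_total 0 ((k - 1) + (k + 1) * z) with hℓ | hℓ
    · refine mul_le_mul_of_nonneg_left (pow_le_pow_left₀ (by positivity) ?_ d) hℓ
      linarith [mul_nonneg hratio.le hℓ]
    · refine mul_le_mul_of_nonpos_left (pow_le_pow_left₀ hP.le ?_ d) hℓ
      linarith [mul_nonpos_of_nonneg_of_nonpos hratio.le hℓ]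
  calc (0 : ℝ) < c * (2 * (k - 1)) := mul_pos hc (by linarith)
    _ = ∫ z in (-1 : ℝ)..1, c * ((k - 1) + (k + 1) * z) := by
      rw [integral_const_mul]
      congr 1
      rw [integral_add intervalIntegrable_const
        ((continuous_const_mul (k + 1)).intervalIntegrable _ _), integral_const_mul]
      norm_num
      ring
    _ ≤ _ := integral_mono_on (by norm_num) (Continuous.intervalIntegrable (by fun_prop) _ _)
      (Continuous.intervalIntegrable (by fun_prop) _ _) hpoint

theorem integral_one_sub_mul_linear_pow_lt (hk : 1 < k) (d : ℕ) :
    ∫ z in (-1 : ℝ)..1, (1 - z) * ((k + 1) + (k - 1) * z) ^ d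
      < k * ∫ z in (-1 : ℝ)..1, (1 + z) * ((k + 1) + (k - 1) * z) ^ d := by
  rw [← integral_const_mul, ← sub_pos, ← integral_sub
    (Continuous.intervalIntegrable (by fun_prop) _ _) (Continuous.intervalIntegrable (by fun_prop) _ _)]
  exact (integral_mul_linear_pow_pos hk d).trans_eq (integral_congr fun z _ ↦ by ring)

end

theorem integral_slope_eq_pow_mul_sub (k t : ℝ) (d : ℕ) :
    ∫ z in (-1 : ℝ)..1, ((1 - k * t) - (1 + k * t) * z) * ((k * t + t) + (k * t - t) * z) ^ d
      = t ^ d * ((∫ z in (-1 : ℝ)..1, (1 - z) * ((k + 1) + (k - 1) * z) ^ d)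
        - k * t * ∫ z in (-1 : ℝ)..1, (1 + z) * ((k + 1) + (k - 1) * z) ^ d) := by
  have hfactor : ∀ z : ℝ, ((1 - k * t) - (1 + k * t) * z) * ((k * t + t) + (k * t - t) * z) ^ d
      = t ^ d * ((1 - z) * ((k + 1) + (k - 1) * z) ^ d)
        - t ^ d * (k * t) * ((1 + z) * ((k + 1) + (k - 1) * z) ^ d) := fun z ↦ by
    rw [show (k * t + t) + (k * t - t) * z = t * ((k + 1) + (k - 1) * z) by ring, mul_pow]
    ring
  simp_rw [hfactor]
  rw [integral_sub (Continuous.intervalIntegrable (by fun_prop) _ _)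
    (Continuous.intervalIntegrable (by fun_prop) _ _), integral_const_mul, integral_const_mul]
  ring

theorem stmt19_general (dN : ℕ) (k : ℚ) (hk : 1 < k) :
    ∃ t : ℚ,
      (t : ℝ) = (∫ z in (-1 : ℝ)..1, (1 - z) * (((k : ℝ) + 1) + ((k : ℝ) - 1) * z) ^ dN) /
        ((k : ℝ) * ∫ z in (-1 : ℝ)..1, (1 + z) * (((k : ℝ) + 1) + ((k : ℝ) - 1) * z) ^ dN) ∧
      0 < t ∧ t < 1 ∧
      (∫ z in (-1 : ℝ)..1,
        ((1 - (k : ℝ) * t) - (1 + (k : ℝ) * t) * z) *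
          (((k : ℝ) * t + t) + ((k : ℝ) * t - t) * z) ^ dN) = 0 := by
  obtain ⟨A, hA⟩ := ((1 - X) * (C (k + 1) + C (k - 1) * X) ^ dN)
    |>.exists_rat_intervalIntegral_aeval_eq (-1) 1
  obtain ⟨B, hB⟩ := ((1 + X) * (C (k + 1) + C (k - 1) * X) ^ dN)
    |>.exists_rat_intervalIntegral_aeval_eq (-1) 1
  simp only [map_mul, map_pow, map_add, map_sub, map_one, aeval_X, aeval_C, eq_ratCast,
    Rat.cast_neg, Rat.cast_one] at hA hB
  have hk' : (1 : ℝ) < k := by exact_mod_cast hk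
  have hA_pos : 0 < A := by exact_mod_cast hA ▸ integral_one_sub_mul_linear_pow_pos hk' dN
  have hB_pos : 0 < B := by exact_mod_cast hB ▸ integral_one_add_mul_linear_pow_pos hk' dN
  have hAB : A < k * B := by exact_mod_cast hA ▸ hB ▸ integral_one_sub_mul_linear_pow_lt hk' dN
  have hkB : 0 < k * B := by positivity
  refine ⟨A / (k * B), ?_, div_pos hA_pos hkB, (div_lt_one hkB).2 hAB, ?_⟩
  · rw [hA, hB]
    push_cast
    ring
  · rw [integral_slope_eq_pow_mul_sub, hA, hB]
    push_cast
    field_simp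
    ring

theorem stmt19 (dN : ℕ) (hdN : 1 ≤ dN) (k : ℚ) (hk : 1 < k) :
    ∃ t : ℚ,
      (t : ℝ) = (∫ z in (-1 : ℝ)..1, (1 - z) * (((k : ℝ) + 1) + ((k : ℝ) - 1) * z) ^ dN) /
        ((k : ℝ) * ∫ z in (-1 : ℝ)..1, (1 + z) * (((k : ℝ) + 1) + ((k : ℝ) - 1) * z) ^ dN) ∧
      0 < t ∧ t < 1 ∧
      (∫ z in (-1 : ℝ)..1,
        ((1 - (k : ℝ) * t) - (1 + (k : ℝ) * t) * z) *
          (((k : ℝ) * t + t) + ((k : ℝ) * t - t) * z) ^ dN) = 0 :=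
  stmt19_general dN k hk
end
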